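/- Let G be a planar domain with holes and let Q : cl(G) → M₃(ℝ) be continuous with Q(x) ∈ 𝒬 for all x ∈ cl(G). Then there exists ν > 0 with the following property: whenever x̄ ∈ cl(G), −∞ < t₁ < t₂ < ∞, f_j (j ∈ ℕ) and f are continuous maps from [t₁,t₂] to cl(G) whose images are contained in the open ball B(x̄,ν), f_j(t₂) → f(t₂) as j → ∞, and n_j, n : [t₁,t₂] → 𝕊² are continuous maps satisfying P(n_j(t)) = Q(f_j(t)) and P(n(t)) = Q(f(t)) for all t ∈ [t₁,t₂] and |n_j(t₁) − n(t₁)| < 1 for all j, then n_j(t₂) → n(t₂) as j → ∞. -/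

import Mathlib

/-!
Since `P(n) = P(n')` forces `n' = ±n`, for unit lifts `m` of `Q x` and `n` of `Q y` the number
`⟪m, n⟫²` is a function of `(x, y)` alone, namely `tr (L(x) L(y))` with `L = s⁻¹ Q + 1/3 = n ⊗ n`.
It is continuous and equals `1` on the diagonal, so by uniform continuity on the compact set
`cl G × cl G` it is positive for `|x - y| < 2ν`. Along the paths, `⟪n_j(t), n(t)⟫` therefore never
vanishes; it is `> 1/2` at `t₁`, hence positive at `t₂`, where it equals
`√(tr (L(f_j(t₂)) L(f(t₂)))) → 1`. For unit vectors this means `n_j(t₂) → n(t₂)`.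
-/

/-- `P(n) = s (n⊗n − (1/3) Id)`. -/
noncomputable def Pmat (s : ℝ) (n : Fin 3 → ℝ) : Matrix (Fin 3) (Fin 3) ℝ :=
  s • (Matrix.vecMulVec n n - (1 / 3 : ℝ) • (1 : Matrix (Fin 3) (Fin 3) ℝ))

/-- A Jordan curve in the plane: the image of an injective continuous map from the
unit circle `𝕊¹`. -/
def IsJordanCurve (C : Set (EuclideanSpace ℝ (Fin 2))) : Prop :=
  ∃ f : Metric.sphere (0 : EuclideanSpace ℝ (Fin 2)) 1 → EuclideanSpace ℝ (Fin 2),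
    Continuous f ∧ Function.Injective f ∧ Set.range f = C

open Filter Topology Matrix
open scoped RealInnerProductSpace

theorem IsPreconnected.pos_of_forall_ne_zero {X : Type*} [TopologicalSpace X] {S : Set X}
    (hS : IsPreconnected S) {f : X → ℝ} (hf : ContinuousOn f S) (hne : ∀ x ∈ S, f x ≠ 0)
    {a b : X} (ha : a ∈ S) (hb : b ∈ S) (hfa : 0 < f a) : 0 < f b := by
  by_contra! hfb
  obtain ⟨x, hx, hfx⟩ := hS.intermediate_value hb ha hf ⟨hfb, hfa.le⟩
  exact hne x hx hfx

theorem IsCompact.exists_pos_forall_dist_apply_diag_lt {X Y : Type*} [PseudoMetricSpace X]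
    [PseudoMetricSpace Y] {K : Set X} (hK : IsCompact K) {g : X × X → Y}
    (hg : ContinuousOn g (K ×ˢ K)) {ε : ℝ} (hε : 0 < ε) :
    ∃ δ > 0, ∀ x ∈ K, ∀ y ∈ K, dist x y < δ → dist (g (x, y)) (g (y, y)) < ε := by
  obtain ⟨δ, hδ, hgδ⟩ :=
    Metric.uniformContinuousOn_iff.mp ((hK.prod hK).uniformContinuousOn_of_continuous hg) ε hε
  refine ⟨δ, hδ, fun x hx y hy hxy => hgδ _ ⟨hx, hy⟩ _ ⟨hy, hy⟩ ?_⟩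
  simpa [Prod.dist_eq, hδ] using hxy

section UnitVectors

variable {E : Type*} [NormedAddCommGroup E] [InnerProductSpace ℝ E]

theorem norm_sub_sq_eq_two_sub_inner {u v : E} (hu : ‖u‖ = 1) (hv : ‖v‖ = 1) :
    ‖u - v‖ ^ 2 = 2 - 2 * ⟪u, v⟫ := by
  rw [norm_sub_sq_real, hu, hv]; ring

theorem tendsto_of_tendsto_inner_one {α : Type*} {l : Filter α} {u : α → E} {v : E}
    (hu : ∀ a, ‖u a‖ = 1) (hv : ‖v‖ = 1) (h : Tendsto (fun a => ⟪u a, v⟫) l (𝓝 1)) :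
    Tendsto u l (𝓝 v) := by
  rw [tendsto_iff_norm_sub_tendsto_zero]
  have hnorm : ∀ a, ‖u a - v‖ = √(2 - 2 * ⟪u a, v⟫) := fun a => by
    rw [← norm_sub_sq_eq_two_sub_inner (hu a) hv, Real.sqrt_sq (norm_nonneg _)]
  simpa [hnorm] using ((tendsto_const_nhds (x := (2 : ℝ))).sub (h.const_mul 2)).sqrt

end UnitVectors

/-- For `M = P(n)` with `s ≠ 0` and `‖n‖ = 1` this is `n ⊗ n`, the projection onto `ℝ n`. -/
noncomputable def lineProj (s : ℝ) (M : Matrix (Fin 3) (Fin 3) ℝ) : Matrix (Fin 3) (Fin 3) ℝ :=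
  s⁻¹ • M + (1 / 3 : ℝ) • 1

theorem vecMulVec_self_eq_lineProj_of_Pmat_eq {s : ℝ} (hs : s ≠ 0) {v : Fin 3 → ℝ}
    {M : Matrix (Fin 3) (Fin 3) ℝ} (h : Pmat s v = M) : vecMulVec v v = lineProj s M := by
  subst h
  rw [lineProj, Pmat, smul_smul, inv_mul_cancel₀ hs, one_smul, sub_add_cancel]

theorem trace_vecMulVec_mul_vecMulVec {ι R : Type*} [Fintype ι] [CommRing R] (u v : ι → R) :
    trace (vecMulVec u u * vecMulVec v v) = (u ⬝ᵥ v) ^ 2 := by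
  rw [vecMulVec_mul_vecMulVec, trace_vecMulVec, dotProduct_smul, smul_eq_mul, sq]

theorem trace_lineProj_mul_lineProj {s : ℝ} (hs : s ≠ 0) {m n : EuclideanSpace ℝ (Fin 3)}
    {M M' : Matrix (Fin 3) (Fin 3) ℝ} (hm : Pmat s (fun i => m i) = M)
    (hn : Pmat s (fun i => n i) = M') : trace (lineProj s M * lineProj s M') = ⟪m, n⟫ ^ 2 := by
  rw [← vecMulVec_self_eq_lineProj_of_Pmat_eq hs hm, ← vecMulVec_self_eq_lineProj_of_Pmat_eq hs hn,
    trace_vecMulVec_mul_vecMulVec, EuclideanSpace.inner_eq_star_dotProduct, star_trivial,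
    dotProduct_comm]

theorem trace_lineProj_mul_self {s : ℝ} (hs : s ≠ 0) {n : EuclideanSpace ℝ (Fin 3)}
    {M : Matrix (Fin 3) (Fin 3) ℝ} (hn₁ : ‖n‖ = 1) (hn : Pmat s (fun i => n i) = M) :
    trace (lineProj s M * lineProj s M) = 1 := by
  rw [trace_lineProj_mul_lineProj hs hn hn, real_inner_self_eq_norm_sq, hn₁, one_pow, one_pow]

section Lifts

variable {X : Type*} {s : ℝ} {Q : X → Matrix (Fin 3) (Fin 3) ℝ} {K : Set X}

theorem ContinuousOn.trace_lineProj_mul [TopologicalSpace X] (hQ : ContinuousOn Q K) :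
    ContinuousOn (fun p : X × X => trace (lineProj s (Q p.1) * lineProj s (Q p.2))) (K ×ˢ K) := by
  have hA : ContinuousOn (fun x => lineProj s (Q x)) K := (hQ.const_smul s⁻¹).add continuousOn_const
  have htr : Continuous fun AB : Matrix (Fin 3) (Fin 3) ℝ × Matrix (Fin 3) (Fin 3) ℝ =>
      trace (AB.1 * AB.2) :=
    (continuous_fst.matrix_mul continuous_snd).matrix_trace
  exact (htr.comp_continuousOn (hA.prodMap hA) :)

theorem IsCompact.exists_pos_forall_inner_ne_zero_of_Pmat_eq [PseudoMetricSpace X]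
    (hK : IsCompact K) (hs : s ≠ 0) (hQ : ContinuousOn Q K) :
    ∃ δ > 0, ∀ x ∈ K, ∀ y ∈ K, dist x y < δ → ∀ m v : EuclideanSpace ℝ (Fin 3), ‖v‖ = 1 →
      Pmat s (fun i => m i) = Q x → Pmat s (fun i => v i) = Q y → ⟪m, v⟫ ≠ 0 := by
  obtain ⟨δ, hδ, hψδ⟩ := hK.exists_pos_forall_dist_apply_diag_lt hQ.trace_lineProj_mul one_pos
  refine ⟨δ, hδ, fun x hx y hy hxy m v hv hm hv' h0 => ?_⟩
  have h := hψδ x hx y hy hxy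
  rw [trace_lineProj_mul_lineProj hs hm hv', trace_lineProj_mul_self hs hv hv', h0] at h
  norm_num at h

theorem tendsto_inner_sq_of_Pmat_eq [TopologicalSpace X] (hs : s ≠ 0) (hQ : ContinuousOn Q K)
    {x : ℕ → X} {y : X} (hx : ∀ j, x j ∈ K) (hy : y ∈ K) (hxy : Tendsto x atTop (𝓝 y))
    {m : ℕ → EuclideanSpace ℝ (Fin 3)} {v : EuclideanSpace ℝ (Fin 3)}
    (hm : ∀ j, Pmat s (fun i => m j i) = Q (x j)) (hv₁ : ‖v‖ = 1)
    (hv : Pmat s (fun i => v i) = Q y) :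
    Tendsto (fun j => ⟪m j, v⟫ ^ 2) atTop (𝓝 1) := by
  have := (hQ.trace_lineProj_mul (s := s) _ ⟨hy, hy⟩).tendsto.comp
    (tendsto_nhdsWithin_iff.2 ⟨hxy.prodMk_nhds tendsto_const_nhds, .of_forall fun j => ⟨hx j, hy⟩⟩)
  convert this using 2 with j
  · exact (trace_lineProj_mul_lineProj hs (hm j) hv).symm
  · exact (trace_lineProj_mul_self hs hv₁ hv).symm

end Lifts

theorem stmt11_general (s : ℝ) (hs : s ≠ 0)
    (Ω : Set (EuclideanSpace ℝ (Fin 2)))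
    (hbdd : Bornology.IsBounded Ω)
    (N : ℕ) (ω : Fin N → Set (EuclideanSpace ℝ (Fin 2)))
    (G : Set (EuclideanSpace ℝ (Fin 2))) (hG : G = Ω \ ⋃ i, closure (ω i))
    (Q : EuclideanSpace ℝ (Fin 2) → Matrix (Fin 3) (Fin 3) ℝ)
    (hQc : ContinuousOn Q (closure G)) :
    ∃ ν : ℝ, 0 < ν ∧
      ∀ xbar ∈ closure G, ∀ t₁ t₂ : ℝ, t₁ < t₂ →
      ∀ (f : ℕ → ℝ → EuclideanSpace ℝ (Fin 2)) (f₀ : ℝ → EuclideanSpace ℝ (Fin 2)),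
        (∀ j, ContinuousOn (f j) (Set.Icc t₁ t₂)) →
        ContinuousOn f₀ (Set.Icc t₁ t₂) →
        (∀ j, ∀ t ∈ Set.Icc t₁ t₂, f j t ∈ closure G ∧ f j t ∈ Metric.ball xbar ν) →
        (∀ t ∈ Set.Icc t₁ t₂, f₀ t ∈ closure G ∧ f₀ t ∈ Metric.ball xbar ν) →
        Filter.Tendsto (fun j => f j t₂) Filter.atTop (nhds (f₀ t₂)) →
      ∀ (n : ℕ → ℝ → EuclideanSpace ℝ (Fin 3)) (n₀ : ℝ → EuclideanSpace ℝ (Fin 3)),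
        (∀ j, ContinuousOn (n j) (Set.Icc t₁ t₂)) →
        ContinuousOn n₀ (Set.Icc t₁ t₂) →
        (∀ j, ∀ t ∈ Set.Icc t₁ t₂, ‖n j t‖ = 1 ∧ Pmat s (fun i => n j t i) = Q (f j t)) →
        (∀ t ∈ Set.Icc t₁ t₂, ‖n₀ t‖ = 1 ∧ Pmat s (fun i => n₀ t i) = Q (f₀ t)) →
        (∀ j, ‖n j t₁ - n₀ t₁‖ < 1) →
        Filter.Tendsto (fun j => n j t₂) Filter.atTop (nhds (n₀ t₂)) := by
  have hK : IsCompact (closure G) := (hbdd.subset (hG ▸ Set.sdiff_subset)).isCompact_closure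
  obtain ⟨δ, hδ, hne⟩ := hK.exists_pos_forall_inner_ne_zero_of_Pmat_eq hs hQc
  refine ⟨δ / 2, half_pos hδ, ?_⟩
  intro xbar _ t₁ t₂ ht f f₀ _ _ hf hf₀ hft n n₀ hn hn₀ hnP hn₀P hinit
  have ht₁ : t₁ ∈ Set.Icc t₁ t₂ := Set.left_mem_Icc.2 ht.le
  have ht₂ : t₂ ∈ Set.Icc t₁ t₂ := Set.right_mem_Icc.2 ht.le
  have hdist : ∀ j, ∀ t ∈ Set.Icc t₁ t₂, dist (f j t) (f₀ t) < δ := fun j t ht => by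
    have h₁ := Metric.mem_ball.1 (hf j t ht).2
    have h₂ := Metric.mem_ball.1 (hf₀ t ht).2
    linarith [dist_triangle_right (f j t) (f₀ t) xbar]
  have hpos : ∀ j, 0 < ⟪n j t₂, n₀ t₂⟫ := fun j => by
    refine isPreconnected_Icc.pos_of_forall_ne_zero ((hn j).inner hn₀) (fun t ht => ?_) ht₁ ht₂ ?_
    · exact hne _ (hf j t ht).1 _ (hf₀ t ht).1 (hdist j t ht) _ _ (hn₀P t ht).1
        (hnP j t ht).2 (hn₀P t ht).2
    · nlinarith [norm_sub_sq_eq_two_sub_inner (hnP j t₁ ht₁).1 (hn₀P t₁ ht₁).1, hinit j,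
        norm_nonneg (n j t₁ - n₀ t₁)]
  have hsq := tendsto_inner_sq_of_Pmat_eq hs hQc (fun j => (hf j t₂ ht₂).1) (hf₀ t₂ ht₂).1 hft
    (fun j => (hnP j t₂ ht₂).2) (hn₀P t₂ ht₂).1 (hn₀P t₂ ht₂).2
  refine tendsto_of_tendsto_inner_one (fun j => (hnP j t₂ ht₂).1) (hn₀P t₂ ht₂).1 ?_
  simpa [Real.sqrt_sq (hpos _).le] using hsq.sqrt

/-- for a continuous `𝒬`-valued field `Q` on the closure of a planar
domain with holes `G`, there is a `ν > 0` such that liftings along paths contained in a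
ball of radius `ν` which start close together (distance `< 1` at `t₁`) converge at `t₂`
whenever the underlying paths converge at `t₂`. -/
theorem stmt11 (s : ℝ) (hs : s ≠ 0) (hs' : s ∈ Set.Icc (-(1 / 2) : ℝ) 1)
    (Ω : Set (EuclideanSpace ℝ (Fin 2)))
    (hopen : IsOpen Ω) (hconn : IsConnected Ω) (hbdd : Bornology.IsBounded Ω)
    (hJordan : IsJordanCurve (frontier Ω))
    (N : ℕ) (ω : Fin N → Set (EuclideanSpace ℝ (Fin 2)))
    (hωopen : ∀ i, IsOpen (ω i)) (hωconn : ∀ i, IsConnected (ω i))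
    (hωbdd : ∀ i, Bornology.IsBounded (ω i))
    (hωJordan : ∀ i, IsJordanCurve (frontier (ω i)))
    (hsub : ∀ i, closure (ω i) ⊆ Ω)
    (hdisj : ∀ i j, i ≠ j → closure (ω i) ∩ closure (ω j) = ∅)
    (G : Set (EuclideanSpace ℝ (Fin 2))) (hG : G = Ω \ ⋃ i, closure (ω i))
    (Q : EuclideanSpace ℝ (Fin 2) → Matrix (Fin 3) (Fin 3) ℝ)
    (hQc : ContinuousOn Q (closure G))
    (hQval : ∀ x ∈ closure G, ∃ m : EuclideanSpace ℝ (Fin 3), ‖m‖ = 1 ∧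
      Q x = Pmat s (fun i => m i)) :
    ∃ ν : ℝ, 0 < ν ∧
      ∀ xbar ∈ closure G, ∀ t₁ t₂ : ℝ, t₁ < t₂ →
      ∀ (f : ℕ → ℝ → EuclideanSpace ℝ (Fin 2)) (f₀ : ℝ → EuclideanSpace ℝ (Fin 2)),
        (∀ j, ContinuousOn (f j) (Set.Icc t₁ t₂)) →
        ContinuousOn f₀ (Set.Icc t₁ t₂) →
        (∀ j, ∀ t ∈ Set.Icc t₁ t₂, f j t ∈ closure G ∧ f j t ∈ Metric.ball xbar ν) →
        (∀ t ∈ Set.Icc t₁ t₂, f₀ t ∈ closure G ∧ f₀ t ∈ Metric.ball xbar ν) →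
        Filter.Tendsto (fun j => f j t₂) Filter.atTop (nhds (f₀ t₂)) →
      ∀ (n : ℕ → ℝ → EuclideanSpace ℝ (Fin 3)) (n₀ : ℝ → EuclideanSpace ℝ (Fin 3)),
        (∀ j, ContinuousOn (n j) (Set.Icc t₁ t₂)) →
        ContinuousOn n₀ (Set.Icc t₁ t₂) →
        (∀ j, ∀ t ∈ Set.Icc t₁ t₂, ‖n j t‖ = 1 ∧ Pmat s (fun i => n j t i) = Q (f j t)) →
        (∀ t ∈ Set.Icc t₁ t₂, ‖n₀ t‖ = 1 ∧ Pmat s (fun i => n₀ t i) = Q (f₀ t)) →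
        (∀ j, ‖n j t₁ - n₀ t₁‖ < 1) →
        Filter.Tendsto (fun j => n j t₂) Filter.atTop (nhds (n₀ t₂)) :=
  stmt11_general s hs Ω hbdd N ω G hG Q hQc
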